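/- Define the polynomial F(t,y) := (162t³−243t²−243t+162)y⁷ + (−567t³+2268t²−567t)y⁶ + (−1701t³−1701t²)y⁵ + (1407t⁴+2856t³+1407t²)y⁴ + (14t⁵−2849t⁴−2849t³+14t²)y³ + (−21t⁵+3444t⁴−21t³)y² + (−567t⁵−567t⁴)y + (125t⁶−88t⁵+125t⁴), and the rational functions Y(s) := −(5s²−8s+5)(7s²−7s+4)/(s(s−2)(s+1)(2s−1)(4s²−7s+7)) and T(s) := (7s²−7s+4)²/(s³(4s²−7s+7)²). Then for every s ∈ ℂ with s(s−2)(s+1)(2s−1)(4s²−7s+7) ≠ 0, one has F(T(s), Y(s)) = 0. -/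

import Mathlib

/-- The polynomial `F(t,y)` cutting out the Klein solution curve. -/
def kleinF (t y : ℂ) : ℂ :=
  (162*t^3 - 243*t^2 - 243*t + 162) * y^7
  + (-567*t^3 + 2268*t^2 - 567*t) * y^6
  + (-1701*t^3 - 1701*t^2) * y^5
  + (1407*t^4 + 2856*t^3 + 1407*t^2) * y^4
  + (14*t^5 - 2849*t^4 - 2849*t^3 + 14*t^2) * y^3
  + (-21*t^5 + 3444*t^4 - 21*t^3) * y^2
  + (-567*t^5 - 567*t^4) * y
  + (125*t^6 - 88*t^5 + 125*t^4)

/-- The rational parameterisation of the Klein solution: `y`-coordinate. -/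
noncomputable def kleinY (s : ℂ) : ℂ :=
  -((5*s^2 - 8*s + 5) * (7*s^2 - 7*s + 4)) /
    (s * (s - 2) * (s + 1) * (2*s - 1) * (4*s^2 - 7*s + 7))

/-- The rational parameterisation of the Klein solution: `t`-coordinate. -/
noncomputable def kleinT (s : ℂ) : ℂ :=
  (7*s^2 - 7*s + 4)^2 / (s^3 * (4*s^2 - 7*s + 7)^2)

/-!
Writing `T = P / B` and `Y = N / A` with polynomials `P, B, N, A` in `s`, clearing denominators turns
`F(T, Y)` into `H(P, N, A, B) / (A⁷ B⁶)`, where `H` is the bihomogenisation of `F`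
(bidegree `(6, 7)` in `(t, y)`). For the Klein parameterisation the numerator `H(P, N, A, B)`
is a polynomial in `s` that vanishes identically.
-/

def kleinFHom (p n a b : ℂ) : ℂ :=
  (162*p^3 - 243*p^2*b - 243*p*b^2 + 162*b^3) * b^3 * n^7
  + (-567*p^3 + 2268*p^2*b - 567*p*b^2) * b^3 * n^6 * a
  + (-1701*p^3 - 1701*p^2*b) * b^3 * n^5 * a^2
  + (1407*p^4 + 2856*p^3*b + 1407*p^2*b^2) * b^2 * n^4 * a^3
  + (14*p^5 - 2849*p^4*b - 2849*p^3*b^2 + 14*p^2*b^3) * b * n^3 * a^4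
  + (-21*p^5 + 3444*p^4*b - 21*p^3*b^2) * b * n^2 * a^5
  + (-567*p^5 - 567*p^4*b) * b * n * a^6
  + (125*p^6 - 88*p^5*b + 125*p^4*b^2) * a^7

theorem kleinF_div_div {p n a b : ℂ} (ha : a ≠ 0) (hb : b ≠ 0) :
    kleinF (p / b) (n / a) = kleinFHom p n a b / (a^7 * b^6) := by
  rw [eq_div_iff (by positivity)]
  unfold kleinF kleinFHom
  field_simp

theorem kleinFHom_klein_parameterisation (s : ℂ) :
    kleinFHom ((7*s^2 - 7*s + 4)^2) (-((5*s^2 - 8*s + 5) * (7*s^2 - 7*s + 4)))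
      (s * (s - 2) * (s + 1) * (2*s - 1) * (4*s^2 - 7*s + 7))
      (s^3 * (4*s^2 - 7*s + 7)^2) = 0 := by
  unfold kleinFHom
  ring

/-- The rational parameterisation `(T(s), Y(s))` lies on the Klein solution
curve `F(t,y) = 0`. -/
theorem stmt17 :
    ∀ s : ℂ, s * (s - 2) * (s + 1) * (2*s - 1) * (4*s^2 - 7*s + 7) ≠ 0 →
      kleinF (kleinT s) (kleinY s) = 0 := by
  intro s h
  have hs : s ≠ 0 := fun hs => h (by simp [hs])
  have hq : 4*s^2 - 7*s + 7 ≠ 0 := fun hq => h (by simp [hq])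
  rw [kleinT, kleinY, kleinF_div_div h (by positivity), kleinFHom_klein_parameterisation,
    zero_div]
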